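/- Let V be a (G_Γ, β, γ0)-vertex coalgebra as in the context, and assume β satisfies β(γ1, γ2)·β(γ1, γ3) = β(γ1, γ2+γ3) for all γ1, γ2, γ3 ∈ Γ. Then for every v ∈ Ker Ŷ_{−2}: (i) Ŷ_0(v) lies in the image of the canonical map (Ker Ŷ_{−2}) ⊗ (Ker Ŷ_{−2}) → V ⊗ V; (ii) Ŷ_0(v) + T^β(Ŷ_0(v)) = 0; (iii) (id_{V⊗V⊗V} + ξ^β + ξ^β∘ξ^β)((id_V ⊗ Ŷ_0)(Ŷ_0(v))) = 0 in V⊗V⊗V, where ξ^β = (id_V ⊗ T^β)∘(T^β ⊗ id_V); (iv) (Ŷ_{−1} ⊗ id_V)(Ŷ_0(v)) = (id_V ⊗ Ŷ_0)(Ŷ_{−1}(v)) − ξ^β((Ŷ_0 ⊗ id_V)(Ŷ_{−1}(v))), all identities being read via the canonical associativity isomorphisms of triple tensor products. Consequently Ker Ŷ_{−2}, with the restrictions of Ŷ_{−1}, ε and Ŷ_0, is a β-cocommutative (G_Γ, β)-co-Poisson coalgebra of degree 0. -/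

import Mathlib

open TensorProduct

/-- The generalized binomial coefficient `binom(a, i) = a(a-1)⋯(a-i+1)/i!`
for `a : ℤ`, `i : ℕ`; it is an integer. -/
def zbinom (a : ℤ) (i : ℕ) : ℤ :=
  if 0 ≤ a then (a.toNat.choose i : ℤ)
  else (-1 : ℤ) ^ i * ((((i : ℤ) - a - 1).toNat).choose i : ℤ)

/-- The degree-`δ` component of `V ⊗ V` for a `Γ`-graded space
`V = ⊕ Vg γ`: the span of the pure tensors `u ⊗ v` with `u ∈ Vg γ1`,
`v ∈ Vg γ2` and `γ1 + γ2 = δ`. -/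
def tensorDeg {k Γ V : Type*} [Field k] [AddCommGroup Γ]
    [AddCommGroup V] [Module k V] (Vg : Γ → Submodule k V) (δ : Γ) :
    Submodule k (V ⊗[k] V) :=
  Submodule.span k {x : V ⊗[k] V | ∃ (γ1 γ2 : Γ) (u v : V),
    u ∈ Vg γ1 ∧ v ∈ Vg γ2 ∧ γ1 + γ2 = δ ∧ u ⊗ₜ[k] v = x}

/-- A `(G_Γ, β, γ0)`-vertex coalgebra in component form: a `Γ`-graded
`k`-vector space `V` (internal direct sum of the `Vg γ`), linear
coproducts `Yc n : V → V ⊗ V` of degree `n • γ0`, a covacuum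
`ε : V → k` vanishing outside degree `0`, and the twist
`T^β(u ⊗ v) = β(γ1, γ2) • (v ⊗ u)` on homogeneous tensors, satisfying
truncation, covacuum, cocreation, the `β`-co-Jacobi identity and the
coderivation properties of `D̂ = (ε ⊗ id)∘Ŷ_{-2}` (via `k ⊗ V ≅ V`). -/
structure VCoalg (k : Type*) [Field k] (Γ : Type*) [AddCommGroup Γ]
    [DecidableEq Γ] (γ0 : Γ) (β : Γ → Γ → k)
    (V : Type*) [AddCommGroup V] [Module k V] where
  Vg : Γ → Submodule k V
  internal : DirectSum.IsInternal Vg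
  Yc : ℤ → V →ₗ[k] V ⊗[k] V
  eps : V →ₗ[k] k
  T : V ⊗[k] V →ₗ[k] V ⊗[k] V
  grading : ∀ (n : ℤ) (γ : Γ) (v : V), v ∈ Vg γ →
      Yc n v ∈ tensorDeg Vg (γ + n • γ0)
  eps_grading : ∀ (γ : Γ), γ ≠ 0 → ∀ v ∈ Vg γ, eps v = 0
  T_apply : ∀ (γ1 γ2 : Γ) (u v : V), u ∈ Vg γ1 → v ∈ Vg γ2 →
      T (u ⊗ₜ[k] v) = β γ1 γ2 • (v ⊗ₜ[k] u)
  truncation : ∀ v : V, ∃ N : ℤ, ∀ n : ℤ, N ≤ n → Yc n v = 0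
  covacuum : ∀ v : V,
      (TensorProduct.rid k V)
        (TensorProduct.map (LinearMap.id : V →ₗ[k] V) eps (Yc (-1) v)) = v
  covacuum' : ∀ n : ℤ, n ≠ -1 → ∀ v : V,
      (TensorProduct.rid k V)
        (TensorProduct.map (LinearMap.id : V →ₗ[k] V) eps (Yc n v)) = 0
  cocreation : ∀ v : V,
      (TensorProduct.lid k V)
        (TensorProduct.map eps (LinearMap.id : V →ₗ[k] V) (Yc (-1) v)) = v
  cocreation' : ∀ n : ℤ, 0 ≤ n → ∀ v : V,
      (TensorProduct.lid k V)
        (TensorProduct.map eps (LinearMap.id : V →ₗ[k] V) (Yc n v)) = 0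
  coJacobi : ∀ (l m n : ℤ) (v : V),
      (∑ᶠ i : ℕ, (((-1 : k) ^ i * (zbinom l i : k)) •
          (TensorProduct.assoc k V V V)
            (TensorProduct.map (Yc (n + (i : ℤ)))
              (LinearMap.id : V →ₗ[k] V) (Yc (m + l - (i : ℤ)) v))))
        - (-1 : k) ^ l •
            (∑ᶠ i : ℕ, (((-1 : k) ^ i * (zbinom l i : k)) •
              TensorProduct.map (LinearMap.id : V →ₗ[k] V) T
                ((TensorProduct.assoc k V V V)
                  (TensorProduct.map (Yc (m + (i : ℤ)))
                    (LinearMap.id : V →ₗ[k] V) (Yc (n + l - (i : ℤ)) v)))))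
        = ∑ᶠ i : ℕ, ((zbinom m i : k) •
            TensorProduct.map (LinearMap.id : V →ₗ[k] V) (Yc (l + (i : ℤ)))
              (Yc (m + n - (i : ℤ)) v))
  coderiv1 : ∀ (n : ℤ) (v : V),
      Yc n ((TensorProduct.lid k V)
          (TensorProduct.map eps (LinearMap.id : V →ₗ[k] V) (Yc (-2) v)))
        - TensorProduct.map
            ((TensorProduct.lid k V).toLinearMap ∘ₗ
              TensorProduct.map eps (LinearMap.id : V →ₗ[k] V) ∘ₗ Yc (-2))
            (LinearMap.id : V →ₗ[k] V) (Yc n v)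
        = (-n) • Yc (n - 1) v
  coderiv2 : ∀ (n : ℤ) (v : V),
      TensorProduct.map (LinearMap.id : V →ₗ[k] V)
          ((TensorProduct.lid k V).toLinearMap ∘ₗ
            TensorProduct.map eps (LinearMap.id : V →ₗ[k] V) ∘ₗ Yc (-2))
          (Yc n v)
        = (-n) • Yc (n - 1) v

/-- The permutation `ξ^β = (id ⊗ T^β)∘(T^β ⊗ id)` on `V ⊗ (V ⊗ V)`, read via
the canonical associativity isomorphisms. -/
noncomputable def xiB {k V : Type*} [Field k] [AddCommGroup V] [Module k V]
    (T : V ⊗[k] V →ₗ[k] V ⊗[k] V) :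
    V ⊗[k] (V ⊗[k] V) →ₗ[k] V ⊗[k] (V ⊗[k] V) :=
  TensorProduct.map (LinearMap.id : V →ₗ[k] V) T ∘ₗ
    (TensorProduct.assoc k V V V).toLinearMap ∘ₗ
    TensorProduct.map T (LinearMap.id : V →ₗ[k] V) ∘ₗ
    (TensorProduct.assoc k V V V).symm.toLinearMap


/-!
Write `α` for the associator. Everything follows from the `l = 0` case of the co-Jacobi identity,
`α((Ŷ_n ⊗ 1)(Ŷ_m v)) − (1 ⊗ T^β)(α((Ŷ_m ⊗ 1)(Ŷ_n v))) = Σ_i binom(m,i) (1 ⊗ Ŷ_i)(Ŷ_{m+n−i} v)`,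
together with the fact that the coderivation property `(1 ⊗ D̂) Ŷ_n = −n Ŷ_{n−1}` forces
`Ŷ_m v = 0` for every `m ≤ −2` once `Ŷ_{−2} v = 0`, so that the right-hand sides collapse.

Contracting the first factor of the case `(m, n) = (−1, 0)` against the covacuum gives the
skew-symmetry (ii). The case `n = −2` puts the left legs of `Ŷ_m v` (`m ≤ 0`) in `Ker Ŷ_{−2}`,
the case `l = −2, m = n = 0` does the same for the right legs of `Ŷ_0 v`, and tensoring over a
field is exact, which gives (i). Multiplicativity of `β` makes
`ξ^β ∘ (1 ⊗ Ŷ_0) = α ∘ (Ŷ_0 ⊗ 1) ∘ T^β`, and skew-symmetry on the left legs turns `ξ^β` into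
`−(1 ⊗ T^β)` on the relevant terms; (iii) and (iv) are then the cases `(m, n) = (0, 0)` and
`(0, −1)` of the identity.
-/

open TensorProduct LinearMap

section KernelsOfTensorMaps

variable {k M N P Q : Type*} [Field k] [AddCommGroup M] [Module k M] [AddCommGroup N]
  [Module k N] [AddCommGroup P] [Module k P] [AddCommGroup Q] [Module k Q]

theorem mem_range_rTensor_subtype_ker {f : M →ₗ[k] P} {x : M ⊗[k] N}
    (hx : f.rTensor N x = 0) : x ∈ range ((ker f).subtype.rTensor N) :=
  (Module.Flat.rTensor_exact N f.exact_subtype_ker_map x).mp hx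

theorem rTensor_apply_eq_zero_of_ker_le {f : M →ₗ[k] P} {g : M →ₗ[k] Q} (hfg : ker f ≤ ker g)
    {x : M ⊗[k] N} (hx : f.rTensor N x = 0) : g.rTensor N x = 0 := by
  obtain ⟨y, rfl⟩ := mem_range_rTensor_subtype_ker hx
  have hg : g ∘ₗ (ker f).subtype = 0 := by
    ext u
    exact hfg u.2
  rw [← rTensor_comp_apply, hg, rTensor_zero, LinearMap.zero_apply]

theorem mem_range_map_subtype_ker {f : M →ₗ[k] P} {g : N →ₗ[k] Q} {x : M ⊗[k] N}
    (hf : f.rTensor N x = 0) (hg : g.lTensor M x = 0) :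
    x ∈ range (map (ker f).subtype (ker g).subtype) := by
  obtain ⟨y, rfl⟩ := mem_range_rTensor_subtype_ker hf
  have hy : g.lTensor (ker f) y = 0 := by
    apply Module.Flat.rTensor_preserves_injective_linearMap _ (ker f).injective_subtype
    rwa [map_zero, ← comp_apply, rTensor_comp_lTensor, ← lTensor_comp_rTensor, comp_apply]
  obtain ⟨w, rfl⟩ := (Module.Flat.lTensor_exact (ker f) g.exact_subtype_ker_map y).mp hy
  exact ⟨w, by rw [← comp_apply, rTensor_comp_lTensor]⟩

theorem TensorProduct.ext_of_iSup_eq_top {ι κ : Type*} {p : ι → Submodule k M}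
    {q : κ → Submodule k N} (hp : ⨆ i, p i = ⊤) (hq : ⨆ j, q j = ⊤)
    {f g : M ⊗[k] N →ₗ[k] P}
    (h : ∀ i j, ∀ m ∈ p i, ∀ n ∈ q j, f (m ⊗ₜ n) = g (m ⊗ₜ n)) : f = g := by
  rw [Submodule.iSup_eq_span] at hp hq
  refine TensorProduct.ext (ext_on hp fun m hm => ext_on hq fun n hn => ?_)
  obtain ⟨i, hi⟩ := Set.mem_iUnion.mp hm
  obtain ⟨j, hj⟩ := Set.mem_iUnion.mp hn
  exact h i j m hi n hj

end KernelsOfTensorMaps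

section Contraction

variable {k V : Type*} [Field k] [AddCommGroup V] [Module k V] (ε : V →ₗ[k] k)
  {M N W W' : Type*} [AddCommGroup M] [Module k M] [AddCommGroup N] [Module k N]
  [AddCommGroup W] [Module k W] [AddCommGroup W'] [Module k W']

variable (W) in
noncomputable def contractFirst : V ⊗[k] W →ₗ[k] W :=
  (TensorProduct.lid k W).toLinearMap ∘ₗ ε.rTensor W

theorem contractFirst_lTensor (g : W →ₗ[k] W') (x : V ⊗[k] W) :
    contractFirst ε W' (g.lTensor V x) = g (contractFirst ε W x) := by
  induction x using TensorProduct.induction_on with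
  | zero => simp
  | tmul v w => simp [contractFirst]
  | add x y hx hy => simp only [map_add, hx, hy]

theorem contractFirst_assoc (x : (V ⊗[k] M) ⊗[k] N) :
    contractFirst ε (M ⊗[k] N) (TensorProduct.assoc k V M N x) =
      (contractFirst ε M).rTensor N x := by
  induction x using TensorProduct.induction_on with
  | zero => simp
  | tmul y n =>
    induction y using TensorProduct.induction_on with
    | zero => simp
    | tmul v m => simp [contractFirst, smul_tmul']
    | add x y hx hy => simp only [add_tmul, map_add, hx, hy]
  | add x y hx hy => simp only [map_add, hx, hy]

end Contraction

theorem zbinom_zero_right (a : ℤ) : zbinom a 0 = 1 := by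
  unfold zbinom; split_ifs <;> simp

theorem zbinom_zero_left {i : ℕ} (hi : i ≠ 0) : zbinom 0 i = 0 := by
  simp [zbinom, Nat.choose_eq_zero_of_lt (Nat.pos_of_ne_zero hi)]

namespace VCoalg

variable {k Γ V : Type*} [Field k] [AddCommGroup Γ] [DecidableEq Γ] [AddCommGroup V]
  [Module k V] {γ0 : Γ} {β : Γ → Γ → k} (A : VCoalg k Γ γ0 β V)

theorem Yc_eq_zero_of_le [CharZero k] {v : V} (hv : A.Yc (-2) v = 0) {m : ℤ} (hm : m ≤ -2) :
    A.Yc m v = 0 := by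
  induction m, hm using Int.leInductionDown with
  | base => exact hv
  | pred n hn ih =>
    have h := A.coderiv2 n v
    rw [ih, map_zero, eq_comm, ← Int.cast_smul_eq_zsmul k, smul_eq_zero, Int.cast_eq_zero] at h
    exact h.resolve_left (by omega)

theorem coJacobi_zero (m n : ℤ) (v : V) :
    TensorProduct.assoc k V V V ((A.Yc n).rTensor V (A.Yc m v)) -
        A.T.lTensor V (TensorProduct.assoc k V V V ((A.Yc m).rTensor V (A.Yc n v))) =
      ∑ᶠ i : ℕ, (zbinom m i : k) • (A.Yc i).lTensor V (A.Yc (m + n - i) v) := by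
  have h := A.coJacobi 0 m n v
  rw [finsum_eq_single _ 0 (fun i hi => by simp [zbinom_zero_left hi]),
    finsum_eq_single _ 0 (fun i hi => by simp [zbinom_zero_left hi])] at h
  simpa [zbinom_zero_right, ← lTensor_def, ← rTensor_def] using h

theorem coJacobi_zero_zero (n : ℤ) (v : V) :
    TensorProduct.assoc k V V V ((A.Yc n).rTensor V (A.Yc 0 v)) -
        A.T.lTensor V (TensorProduct.assoc k V V V ((A.Yc 0).rTensor V (A.Yc n v))) =
      (A.Yc 0).lTensor V (A.Yc n v) := by
  rw [coJacobi_zero, finsum_eq_single _ 0 (fun i hi => by simp [zbinom_zero_left hi])]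
  simp [zbinom_zero_right]

theorem xiB_tmul_of_mem (hβ : ∀ γ1 γ2 γ3 : Γ, β γ1 γ2 * β γ1 γ3 = β γ1 (γ2 + γ3)) {a b : Γ}
    {u : V} (hu : u ∈ A.Vg a) {z : V ⊗[k] V} (hz : z ∈ tensorDeg A.Vg b) :
    xiB A.T (u ⊗ₜ z) = β a b • TensorProduct.assoc k V V V (z ⊗ₜ u) := by
  refine LinearMap.eqOn_span' (f := xiB A.T ∘ₗ TensorProduct.mk k V (V ⊗[k] V) u)
    (g := β a b • ((TensorProduct.assoc k V V V).toLinearMap ∘ₗ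
      (TensorProduct.mk k (V ⊗[k] V) V).flip u)) ?_ hz
  rintro _ ⟨c, d, w, w', hw, hw', rfl, rfl⟩
  simp [xiB, A.T_apply _ _ _ _ hu hw, A.T_apply _ _ _ _ hu hw', ← smul_tmul', tmul_smul,
    smul_smul, hβ]

theorem xiB_comp_lTensor_Yc_zero (hβ : ∀ γ1 γ2 γ3 : Γ, β γ1 γ2 * β γ1 γ3 = β γ1 (γ2 + γ3)) :
    xiB A.T ∘ₗ (A.Yc 0).lTensor V =
      (TensorProduct.assoc k V V V).toLinearMap ∘ₗ (A.Yc 0).rTensor V ∘ₗ A.T := by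
  refine TensorProduct.ext_of_iSup_eq_top A.internal.submodule_iSup_eq_top
    A.internal.submodule_iSup_eq_top fun a b u hu w hw => ?_
  have hz : A.Yc 0 w ∈ tensorDeg A.Vg b := by simpa using A.grading 0 b w hw
  simp [A.xiB_tmul_of_mem hβ hu hz, A.T_apply a b u w hu hw]

variable [CharZero k] {A} {v : V}

theorem lTensor_Yc_neg_two_Yc_zero (hv : A.Yc (-2) v = 0) :
    (A.Yc (-2)).lTensor V (A.Yc 0 v) = 0 := by
  have h := A.coJacobi (-2) 0 0 v
  have hY : ∀ i : ℕ, A.Yc (0 + -2 - i) v = 0 := fun i => A.Yc_eq_zero_of_le hv (by omega)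
  simp only [hY, map_zero, smul_zero, finsum_zero, sub_zero] at h
  rw [finsum_eq_single _ 0 (fun i hi => by simp [zbinom_zero_left hi])] at h
  simpa [zbinom_zero_right, ← lTensor_def] using h.symm

theorem rTensor_Yc_neg_two_Yc (hv : A.Yc (-2) v = 0) {m : ℤ} (hm : m ≤ 0) :
    (A.Yc (-2)).rTensor V (A.Yc m v) = 0 := by
  have h := A.coJacobi_zero m (-2) v
  have hY : ∀ i : ℕ, A.Yc (m + -2 - i) v = 0 := fun i => A.Yc_eq_zero_of_le hv (by omega)
  simpa [hv, hY] using h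

theorem Yc_zero_add_T (hv : A.Yc (-2) v = 0) : A.Yc 0 v + A.T (A.Yc 0 v) = 0 := by
  have h := A.coJacobi_zero (-1) 0 v
  rw [finsum_eq_single _ 0 (fun i hi => by rw [A.Yc_eq_zero_of_le hv (by omega)]; simp)] at h
  simp only [zbinom_zero_right, Int.cast_one, one_smul, Nat.cast_zero, add_zero, sub_zero] at h
  have hc0 : contractFirst A.eps V ∘ₗ A.Yc 0 = 0 := LinearMap.ext (A.cocreation' 0 le_rfl)
  have hc1 : ∀ w, contractFirst A.eps V (A.Yc (-1) w) = w := A.cocreation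
  have hc1' : contractFirst A.eps V ∘ₗ A.Yc (-1) = LinearMap.id := LinearMap.ext hc1
  have hc := congrArg (contractFirst A.eps (V ⊗[k] V)) h
  rw [map_sub, contractFirst_lTensor, contractFirst_assoc, contractFirst_assoc,
    contractFirst_lTensor, ← rTensor_comp_apply, ← rTensor_comp_apply, hc0,
    hc1', rTensor_zero, rTensor_id, LinearMap.zero_apply, LinearMap.id_apply,
    zero_sub, hc1] at hc
  rw [← eq_neg_iff_add_eq_zero]
  exact hc.symm

theorem rTensor_T_comp_Yc_zero {X : V ⊗[k] V} (hX : (A.Yc (-2)).rTensor V X = 0) :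
    (A.T ∘ₗ A.Yc 0).rTensor V X = -(A.Yc 0).rTensor V X := by
  have hker : ker (A.Yc (-2)) ≤ ker (A.T ∘ₗ A.Yc 0 + A.Yc 0) := fun w hw => by
    simpa [add_comm] using Yc_zero_add_T hw
  have h := rTensor_apply_eq_zero_of_ker_le hker hX
  rwa [rTensor_add, LinearMap.add_apply, add_eq_zero_iff_eq_neg] at h

theorem xiB_assoc_rTensor_Yc_zero {X : V ⊗[k] V} (hX : (A.Yc (-2)).rTensor V X = 0) :
    xiB A.T (TensorProduct.assoc k V V V ((A.Yc 0).rTensor V X)) =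
      -A.T.lTensor V (TensorProduct.assoc k V V V ((A.Yc 0).rTensor V X)) := by
  simp only [xiB, comp_apply, LinearEquiv.coe_coe, LinearEquiv.symm_apply_apply, ← rTensor_def,
    ← lTensor_def]
  rw [← rTensor_comp_apply, rTensor_T_comp_Yc_zero hX, map_neg, map_neg]

end VCoalg

/-- for a `(G_Γ, β, γ0)`-vertex coalgebra `V` with
`β(γ1,γ2)·β(γ1,γ3) = β(γ1,γ2+γ3)`, and every `v ∈ Ker Ŷ_{-2}`:
(i) `Ŷ_0(v)` lies in the image of `(Ker Ŷ_{-2}) ⊗ (Ker Ŷ_{-2}) → V ⊗ V`;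
(ii) `Ŷ_0(v) + T^β(Ŷ_0(v)) = 0`;
(iii) `(id + ξ^β + ξ^β∘ξ^β)((id ⊗ Ŷ_0)(Ŷ_0(v))) = 0`;
(iv) `(Ŷ_{-1} ⊗ id)(Ŷ_0(v)) = (id ⊗ Ŷ_0)(Ŷ_{-1}(v))
       − ξ^β((Ŷ_0 ⊗ id)(Ŷ_{-1}(v)))`,
all read via the canonical associativity isomorphisms.  Consequently
`Ker Ŷ_{-2}`, with the restrictions of `Ŷ_{-1}`, `ε` and `Ŷ_0`, is a
`β`-cocommutative `(G_Γ, β)`-co-Poisson coalgebra of degree `0`. -/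
theorem statement19 {k Γ V : Type*} [Field k] [CharZero k] [AddCommGroup Γ]
    [DecidableEq Γ] [AddCommGroup V] [Module k V]
    (γ0 : Γ) (β : Γ → Γ → k) (A : VCoalg k Γ γ0 β V)
    (hβmul : ∀ γ1 γ2 γ3 : Γ, β γ1 γ2 * β γ1 γ3 = β γ1 (γ2 + γ3)) :
    ∀ v : V, A.Yc (-2) v = 0 →
      (A.Yc 0 v ∈ LinearMap.range
          (TensorProduct.map (LinearMap.ker (A.Yc (-2))).subtype
            (LinearMap.ker (A.Yc (-2))).subtype)) ∧
      (A.Yc 0 v + A.T (A.Yc 0 v) = 0) ∧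
      (TensorProduct.map (LinearMap.id : V →ₗ[k] V) (A.Yc 0) (A.Yc 0 v)
          + xiB A.T
              (TensorProduct.map (LinearMap.id : V →ₗ[k] V) (A.Yc 0)
                (A.Yc 0 v))
          + xiB A.T (xiB A.T
              (TensorProduct.map (LinearMap.id : V →ₗ[k] V) (A.Yc 0)
                (A.Yc 0 v))) = 0) ∧
      ((TensorProduct.assoc k V V V)
          (TensorProduct.map (A.Yc (-1)) (LinearMap.id : V →ₗ[k] V)
            (A.Yc 0 v))
        = TensorProduct.map (LinearMap.id : V →ₗ[k] V) (A.Yc 0)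
              (A.Yc (-1) v)
          - xiB A.T
              ((TensorProduct.assoc k V V V)
                (TensorProduct.map (A.Yc 0) (LinearMap.id : V →ₗ[k] V)
                  (A.Yc (-1) v)))) := by
  intro v hv
  have hY0 : (A.Yc (-2)).rTensor V (A.Yc 0 v) = 0 := VCoalg.rTensor_Yc_neg_two_Yc hv le_rfl
  have hskew := VCoalg.Yc_zero_add_T hv
  simp only [← lTensor_def, ← rTensor_def]
  refine ⟨mem_range_map_subtype_ker hY0 (VCoalg.lTensor_Yc_neg_two_Yc_zero hv), hskew, ?_, ?_⟩
  · have hξ : xiB A.T ((A.Yc 0).lTensor V (A.Yc 0 v)) =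
        -TensorProduct.assoc k V V V ((A.Yc 0).rTensor V (A.Yc 0 v)) := by
      rw [← comp_apply (xiB A.T), A.xiB_comp_lTensor_Yc_zero hβmul, comp_apply, comp_apply,
        eq_neg_of_add_eq_zero_right hskew, map_neg, map_neg, LinearEquiv.coe_coe]
    rw [hξ, map_neg, VCoalg.xiB_assoc_rTensor_Yc_zero hY0, neg_neg, ← A.coJacobi_zero_zero 0 v]
    abel
  · rw [VCoalg.xiB_assoc_rTensor_Yc_zero (VCoalg.rTensor_Yc_neg_two_Yc hv (by norm_num)),
      ← A.coJacobi_zero_zero (-1) v]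
    abel
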